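/- Let X be a real random variable with E[X²] < ∞ that is not almost surely constant, and let Z be a standard Gaussian random variable independent of X. Then for every v > 0, mmse(v) = E[(X − E[X | X + √v Z])²] > 0. -/

import Mathlib

open MeasureTheory ProbabilityTheory

/-!
STATEMENT 10: Let `X` be a real random variable with `E[X²] < ∞` that is not almost
surely constant, and let `Z` be a standard Gaussian independent of `X`. Then for every
`v > 0`, `mmse(v) = E[(X − E[X | X + √v Z])²] > 0`.
-/
theorem mmse_pos_of_nonconstant
    {Ω : Type*} [MeasurableSpace Ω] (μ : Measure Ω) [IsProbabilityMeasure μ]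
    (X Z : Ω → ℝ) (hXmeas : Measurable X) (hZmeas : Measurable Z)
    (hX2 : MemLp X 2 μ)
    (hXnonconst : ¬ ∃ c : ℝ, X =ᵐ[μ] fun _ => c)
    (hZ : Measure.map Z μ = gaussianReal 0 1)
    (hindep : IndepFun X Z μ)
    (v : ℝ) (hv : 0 < v) :
    0 < ∫ ω, (X ω - (μ[X | MeasurableSpace.comap
        (fun ω => X ω + Real.sqrt v * Z ω) inferInstance]) ω) ^ 2 ∂μ := by
  classical
  set Y : Ω → ℝ := fun ω => X ω + Real.sqrt v * Z ω with hYdef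
  have hYmeas : Measurable Y := hXmeas.add (hZmeas.const_mul _)
  have hm : MeasurableSpace.comap Y inferInstance ≤ ‹MeasurableSpace Ω› :=
    hYmeas.comap_le
  haveI : SigmaFinite (μ.trim hm) := inferInstance
  have hXint : Integrable X μ := hX2.integrable one_le_two
  -- the conditional expectation is in L²
  have hceL2 : MemLp (μ[X|MeasurableSpace.comap Y inferInstance]) 2 μ := by
    set fL : Lp ℝ 2 μ := hX2.toLp X with hfL
    have hae : (condExpL2 ℝ ℝ hm fL : Ω → ℝ)
        =ᵐ[μ] μ[X|MeasurableSpace.comap Y inferInstance] := by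
      refine ae_eq_condExp_of_forall_setIntegral_eq hm hXint
        (fun s _ hμs => integrableOn_condExpL2_of_measure_ne_top hm hμs.ne fL)
        (fun s hs hμs => ?_) (aestronglyMeasurable_condExpL2 hm fL)
      rw [integral_condExpL2_eq hm fL hs hμs.ne]
      exact setIntegral_congr_ae (hm s hs) ((hX2.coeFn_toLp).mono fun x hx _ => hx)
    exact (Lp.memLp _).ae_eq hae
  -- the conditional expectation is a measurable function of Y
  set g : ℝ → ℝ := fun b => ∫ y, y ∂(condDistrib X Y μ) b with hgdef
  have hgm : Measurable g := by
    have : StronglyMeasurable fun p : ℝ × ℝ => p.2 :=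
      measurable_snd.stronglyMeasurable
    exact (this.integral_kernel_prod_right' (κ := condDistrib X Y μ)).measurable
  have hce : μ[X|MeasurableSpace.comap Y inferInstance] =ᵐ[μ] fun ω => g (Y ω) :=
    condExp_ae_eq_integral_condDistrib' hYmeas hXint
  -- suppose the mmse is zero
  by_contra hcon
  push_neg at hcon
  have hzero : ∫ ω, (X ω - (μ[X|MeasurableSpace.comap Y inferInstance]) ω) ^ 2 ∂μ = 0 :=
    le_antisymm hcon (integral_nonneg fun ω => sq_nonneg _)
  have hDint : Integrable
      (fun ω => (X ω - (μ[X|MeasurableSpace.comap Y inferInstance]) ω) ^ 2) μ :=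
    (hX2.sub hceL2).integrable_sq
  have hae0 : (fun ω => (X ω - (μ[X|MeasurableSpace.comap Y inferInstance]) ω) ^ 2)
      =ᵐ[μ] 0 :=
    (integral_eq_zero_iff_of_nonneg (fun ω => sq_nonneg _) hDint).mp hzero
  have hXce : X =ᵐ[μ] μ[X|MeasurableSpace.comap Y inferInstance] := by
    filter_upwards [hae0] with ω hω
    have := pow_eq_zero_iff (n := 2) (by norm_num) |>.mp hω
    linarith [sub_eq_zero.mp this]
  have hXg : ∀ᵐ ω ∂μ, X ω = g (X ω + Real.sqrt v * Z ω) := by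
    filter_upwards [hXce, hce] with ω h1 h2
    exact h1.trans h2
  -- transfer to the product measure
  set ν : Measure ℝ := μ.map X with hνdef
  haveI : IsProbabilityMeasure ν := Measure.isProbabilityMeasure_map hXmeas.aemeasurable
  have hSmeas : MeasurableSet {p : ℝ × ℝ | p.1 = g (p.1 + Real.sqrt v * p.2)} :=
    measurableSet_eq_fun measurable_fst
      (hgm.comp (measurable_fst.add (measurable_snd.const_mul _)))
  have hmap : μ.map (fun ω => (X ω, Z ω)) = ν.prod (gaussianReal 0 1) := by
    rw [← hZ]
    exact (indepFun_iff_map_prod_eq_prod_map_map hXmeas.aemeasurable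
      hZmeas.aemeasurable).mp hindep
  have hprod : ∀ᵐ p ∂(ν.prod (gaussianReal 0 1)),
      p.1 = g (p.1 + Real.sqrt v * p.2) := by
    rw [← hmap]
    exact (MeasureTheory.ae_map_iff
      (hXmeas.prodMk hZmeas).aemeasurable hSmeas).mpr hXg
  have hae2 : ∀ᵐ x ∂ν, ∀ᵐ z ∂(gaussianReal 0 1), x = g (x + Real.sqrt v * z) :=
    Measure.ae_ae_of_ae_prod hprod
  -- for ν-a.e. x, g = x volume-a.e.
  set v' : NNReal := ⟨v, hv.le⟩ with hv'def
  have hv' : v' ≠ 0 := by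
    intro h
    rw [NNReal.eq_iff] at h
    exact hv.ne' h
  have hvol : ∀ᵐ x ∂ν, ∀ᵐ y ∂(volume : Measure ℝ), x = g y := by
    filter_upwards [hae2] with x hx
    have hφ : Measurable fun z : ℝ => x + Real.sqrt v * z :=
      measurable_const.add (measurable_id.const_mul _)
    have hsx : MeasurableSet {y : ℝ | x = g y} :=
      measurableSet_eq_fun measurable_const hgm
    have hmapφ : (gaussianReal 0 1).map (fun z : ℝ => x + Real.sqrt v * z)
        = gaussianReal x v' := by
      have h2 : Measure.map (x + ·) (Measure.map (Real.sqrt v * ·) (gaussianReal 0 1))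
          = Measure.map ((x + ·) ∘ (Real.sqrt v * ·)) (gaussianReal 0 1) :=
        Measure.map_map (measurable_const.add measurable_id)
          (measurable_id.const_mul _)
      have h3 : ((x + ·) ∘ (Real.sqrt v * ·)) = fun z : ℝ => x + Real.sqrt v * z := rfl
      rw [← h3, ← h2, gaussianReal_map_const_mul, gaussianReal_map_const_add]
      congr 1
      · ring
      · ext
        simp only [NNReal.coe_mul, NNReal.coe_mk, NNReal.coe_one, hv'def]
        rw [Real.sq_sqrt hv.le, mul_one]
        rfl
    have hgauss : ∀ᵐ y ∂(gaussianReal x v'), x = g y := by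
      rw [← hmapφ]
      exact (MeasureTheory.ae_map_iff hφ.aemeasurable hsx).mpr hx
    exact hgauss.filter_mono (gaussianReal_absolutelyContinuous' x hv').ae_le
  -- such an x is unique, hence X is a.s. constant: contradiction
  haveI : (ae (volume : Measure ℝ)).NeBot := by
    refine ae_neBot.2 ?_
    intro h
    have := congrArg (fun m : Measure ℝ => m Set.univ) h
    simp [Real.volume_univ] at this
  obtain ⟨c, hc⟩ := hvol.exists
  refine hXnonconst ⟨c, ?_⟩
  have hXc : ∀ᵐ x ∂ν, x = c := by
    filter_upwards [hvol] with x hx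
    obtain ⟨y, hy1, hy2⟩ := (hx.and hc).exists
    rw [hy1, hy2]
  have hsc : MeasurableSet {x : ℝ | x = c} := by
    simp only [Set.setOf_eq_eq_singleton]
    exact measurableSet_singleton c
  exact (MeasureTheory.ae_map_iff hXmeas.aemeasurable hsc).mp hXc
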